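/- Let L_1, L_2 be nonzero operators in K[∂;δ] of orders r_1, r_2 with r_2 ≤ r_1. In Ore's Euclidean scheme R_1 = L_1, R_2 = L_2, R_i = R_{i-2} − Q_iR_{i-1} with ord(R_i) < ord(R_{i-1}) for 3 ≤ i ≤ m and R_{m+1} = 0, define C_1 = 1, C_2 = 0, and C_i = C_{i-2} − Q_iC_{i-1} for 3 ≤ i ≤ m. Then (C_{m-1} − Q_{m+1}C_m)·R_1 is a least common left multiple of L_1 and L_2, where Q_{m+1} is the quotient of R_{m-1} by R_m. -/

import Mathlib

/-
Setting: a differential field `(K, δ)` (δ additive and Leibniz), and the ring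
`A = K[∂;δ]` of linear differential operators, axiomatised as follows:
a ring `A`, a ring embedding `ι : K →+* A`, an element `D = ∂` satisfying the
commutation rule `∂ a = a ∂ + δ(a)`, together with the fact that every element
of `A` is uniquely of the form `Σ ι(a_i) ∂^i` (the bijection `e`).
-/

noncomputable section

variable {K A : Type*}

/-- Order of a differential operator, read off from its coefficient expansion
(`e.symm x` is the finitely supported family of coefficients of `x` w.r.t. the powers `∂^i`). -/
def ordOf [Zero K] (e : (ℕ →₀ K) ≃ A) (x : A) : ℕ :=
  (e.symm x).support.sup id

/-- `φ_n` : the row vector `(a_n, a_{n-1}, ..., a_0)` of an operator of order `≤ n`. -/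
def phiV [Zero K] (e : (ℕ →₀ K) ≃ A) (n : ℕ) (x : A) : Fin (n + 1) → K :=
  fun j => e.symm x (n - (j : ℕ))

/-- Inverse of `φ_n` : the operator with coefficient vector `(a_n, ..., a_0)`. -/
def phiInv [AddCommMonoid K] (e : (ℕ →₀ K) ≃ A) (n : ℕ) (v : Fin (n + 1) → K) : A :=
  e (∑ j : Fin (n + 1), Finsupp.single (n - (j : ℕ)) (v j))

/-- The Sylvester-type matrix `S_n(P)` of an operator `P` of order `m`:
rows are `φ_n(∂^{n-m} P), ..., φ_n(P)`. -/
def Syl [Zero K] [Monoid A] (e : (ℕ →₀ K) ≃ A) (D : A) (n m : ℕ) (P : A) :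
    Matrix (Fin (n - m + 1)) (Fin (n + 1)) K :=
  Matrix.of fun i j => phiV e n (D ^ (n - m - (i : ℕ)) * P) j

/-- The block matrix `M_n` with diagonal blocks `S_n(L_i)` and a last block row
of negated identity matrices `S_n(-1)`. -/
def Mmat [Field K] [Ring A] (e : (ℕ →₀ K) ≃ A) (D : A) {k : ℕ}
    (L : Fin k → A) (r : Fin k → ℕ) (n : ℕ) :
    Matrix ((Σ i : Fin k, Fin (n - r i + 1)) ⊕ Fin (n + 1)) (Fin k × Fin (n + 1)) K :=
  Matrix.of fun row col =>
    match row with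
    | Sum.inl ⟨i, a⟩ => if i = col.1 then Syl e D n (r i) (L i) a col.2 else 0
    | Sum.inr a => if (a : ℕ) = (col.2 : ℕ) then -1 else 0

/-- `M` is a (nonzero) common left multiple of the family `L`. -/
def IsCLM [Ring A] {k : ℕ} (L : Fin k → A) (M : A) : Prop :=
  M ≠ 0 ∧ ∀ i, ∃ Q, M = Q * L i

/-- `M` is a least common left multiple of the family `L`: a common left multiple
of minimal order. -/
def IsLCLM [Field K] [Ring A] (e : (ℕ →₀ K) ≃ A) {k : ℕ} (L : Fin k → A) (M : A) : Prop :=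
  IsCLM L M ∧ ∀ M', IsCLM L M' → ordOf e M ≤ ordOf e M'

end

/-
Leading coefficients multiply, because commuting `∂` past a coefficient only creates terms
of lower order; hence `ordOf` behaves like a degree: it is additive on products, and `A` has
no zero divisors. Remainders and cofactors obey the same recurrence
`X_i = X_{i-2} - Q_i X_{i-1}`, so `R_i = C_i L₁ + D_i L₂`, and `R_{m+1} = 0` makes
`C_{m+1} L₁ = (C_{m-1} - Q_{m+1} C_m) L₁` a common left multiple; a degree count along the
recurrence gives `ord C_{m+1} = ord L₂ - ord R_m`. Conversely, for a common left multiple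
`M = U L₁ = V L₂`, running the recurrence on `(U, V)` produces `X_i R_{i-1} = Y_i R_i` with
`ord X_i + ord L₁ + ord L₂ = ord M + ord R_i`, so `ord M ≥ ord L₁ + ord L₂ - ord R_m`.
-/

structure IsOrderFunction {A : Type*} [Ring A] (ord : A → ℕ) : Prop where
  ord_mul : ∀ {x y : A}, x ≠ 0 → y ≠ 0 → ord (x * y) = ord x + ord y
  ord_add_of_lt : ∀ {x y : A}, ord y < ord x → ord (x + y) = ord x
  ord_neg : ∀ x : A, ord (-x) = ord x

-- With `a, b = L₁, L₂` this is the remainder sequence, `euclidSeq Q L₁ L₂ k = R_{k+1}`;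
-- with `a, b = 1, 0` and `0, 1` it gives the two cofactor sequences.
def euclidSeq {A : Type*} [Ring A] (Q : ℕ → A) (a b : A) : ℕ → A
  | 0 => a
  | 1 => b
  | k + 2 => euclidSeq Q a b k - Q (k + 2) * euclidSeq Q a b (k + 1)

section EuclidSeq

variable {A : Type*} [Ring A]

lemma euclidSeq_add_two (Q : ℕ → A) (a b : A) (k : ℕ) :
    euclidSeq Q a b (k + 2) = euclidSeq Q a b k - Q (k + 2) * euclidSeq Q a b (k + 1) := rfl

lemma euclidSeq_bezout (Q : ℕ → A) (a b : A) (k : ℕ) :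
    euclidSeq Q a b k = euclidSeq Q 1 0 k * a + euclidSeq Q 0 1 k * b := by
  induction k using Nat.twoStepInduction with
  | zero => simp [euclidSeq]
  | one => simp [euclidSeq]
  | more k ih₀ ih₁ =>
    rw [euclidSeq_add_two, euclidSeq_add_two, euclidSeq_add_two, ih₀, ih₁]
    noncomm_ring

lemma eq_euclidSeq {Q f : ℕ → A} {a b : A} {N : ℕ} (h₀ : f 0 = a) (h₁ : f 1 = b)
    (hrec : ∀ k, k + 2 ≤ N → f (k + 2) = f k - Q (k + 2) * f (k + 1)) :
    ∀ k ≤ N, f k = euclidSeq Q a b k := by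
  intro k
  induction k using Nat.twoStepInduction with
  | zero => exact fun _ => h₀
  | one => exact fun _ => h₁
  | more k ih₀ ih₁ =>
    intro hk
    rw [hrec k hk, euclidSeq_add_two, ih₀ (by omega), ih₁ (by omega)]

end EuclidSeq

namespace IsOrderFunction

variable {A : Type*} [Ring A] {ord : A → ℕ} (hord : IsOrderFunction ord)
include hord

lemma ord_one [Nontrivial A] : ord 1 = 0 := by
  have := hord.ord_mul (one_ne_zero (α := A)) one_ne_zero
  rw [mul_one] at this
  omega

lemma sub_ne_zero_and_ord_sub {x y : A} (hx : x ≠ 0) (hy : y = 0 ∨ ord y < ord x) :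
    x - y ≠ 0 ∧ ord (x - y) = ord x := by
  rcases hy with rfl | h
  · simpa using hx
  · refine ⟨sub_ne_zero.mpr fun hxy => (hxy ▸ h).false, ?_⟩
    rw [sub_eq_add_neg]
    exact hord.ord_add_of_lt (by rwa [hord.ord_neg])

section Euclid

variable {Q : ℕ → A} {L₁ L₂ : A} {n : ℕ}

local notation "rem" => euclidSeq Q L₁ L₂
local notation "cof" => euclidSeq Q 1 0

lemma quotient_ne_zero_and_ord (hne : ∀ k ≤ n + 1, rem k ≠ 0)
    (hlt : ∀ k < n, ord (rem (k + 2)) < ord (rem (k + 1))) (hzero : rem (n + 2) = 0)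
    {j : ℕ} (hj₁ : 1 ≤ j) (hjn : j ≤ n) :
    Q (j + 2) ≠ 0 ∧ ord (Q (j + 2)) + ord (rem (j + 1)) = ord (rem j) := by
  have hsmall : rem (j + 2) = 0 ∨ ord (rem (j + 2)) < ord (rem j) := by
    rcases hjn.lt_or_eq with hjn | rfl
    · obtain ⟨i, rfl⟩ : ∃ i, j = i + 1 := ⟨j - 1, by omega⟩
      exact Or.inr ((hlt (i + 1) hjn).trans (hlt i (by omega)))
    · exact Or.inl hzero
  obtain ⟨hne', hord'⟩ := hord.sub_ne_zero_and_ord_sub (hne j (by omega)) hsmall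
  rw [euclidSeq_add_two, sub_sub_cancel] at hne' hord'
  have hQ : Q (j + 2) ≠ 0 := left_ne_zero_of_mul hne'
  exact ⟨hQ, by rw [← hord', hord.ord_mul hQ (hne (j + 1) (by omega))]⟩

lemma cofactor_ne_zero_and_ord [NoZeroDivisors A] (hne : ∀ k ≤ n + 1, rem k ≠ 0)
    (hlt : ∀ k < n, ord (rem (k + 2)) < ord (rem (k + 1))) (hzero : rem (n + 2) = 0)
    (k : ℕ) (hk : k ≤ n) :
    cof (k + 2) ≠ 0 ∧ ord (cof (k + 2)) + ord (rem (k + 1)) = ord L₂ := by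
  have : Nontrivial A := nontrivial_of_ne _ _ (hne 0 (by omega))
  induction k using Nat.twoStepInduction with
  | zero => simp [euclidSeq, hord.ord_one]
  | one =>
    obtain ⟨hQ, hQord⟩ := hord.quotient_ne_zero_and_ord hne hlt hzero le_rfl hk
    simpa [euclidSeq, hord.ord_neg] using And.intro hQ hQord
  | more k ih₀ ih₁ =>
    have hC₀ord : ord (cof (k + 2)) + ord (rem (k + 1)) = ord L₂ := (ih₀ (by omega)).2
    obtain ⟨hC₁, hC₁ord⟩ :
        cof (k + 3) ≠ 0 ∧ ord (cof (k + 3)) + ord (rem (k + 2)) = ord L₂ := ih₁ (by omega)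
    obtain ⟨hQ, hQord⟩ :
        Q (k + 4) ≠ 0 ∧ ord (Q (k + 4)) + ord (rem (k + 3)) = ord (rem (k + 2)) :=
      hord.quotient_ne_zero_and_ord hne hlt hzero (j := k + 2) (by omega) hk
    have hlt' : ord (rem (k + 3)) < ord (rem (k + 1)) :=
      (hlt (k + 1) (by omega)).trans (hlt k (by omega))
    have hprod : ord (Q (k + 4) * cof (k + 3)) = ord (Q (k + 4)) + ord (cof (k + 3)) :=
      hord.ord_mul hQ hC₁
    obtain ⟨hne', hord'⟩ := hord.sub_ne_zero_and_ord_sub (mul_ne_zero hQ hC₁)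
      (y := cof (k + 2)) (Or.inr (by omega))
    have hrec : cof (k + 4) = -(Q (k + 4) * cof (k + 3) - cof (k + 2)) := by
      rw [neg_sub]
      rfl
    show cof (k + 4) ≠ 0 ∧ ord (cof (k + 4)) + ord (rem (k + 3)) = ord L₂
    rw [hrec, neg_ne_zero, hord.ord_neg]
    exact ⟨hne', by omega⟩

lemma exists_mul_rem_eq_mul_rem [NoZeroDivisors A] (hne : ∀ k ≤ n + 1, rem k ≠ 0)
    {M U V : A} (hM : M ≠ 0) (hU : M = U * L₁) (hV : M = V * L₂) (k : ℕ) (hk : k ≤ n) :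
    ∃ X Y : A, X ≠ 0 ∧ X * rem k = Y * rem (k + 1) ∧
      ord X + ord L₁ + ord L₂ = ord M + ord (rem (k + 1)) := by
  induction k with
  | zero =>
    have hL₁ : L₁ ≠ 0 := hne 0 (by omega)
    have hU₀ : U ≠ 0 := by
      rintro rfl
      exact hM (by rw [hU, zero_mul])
    refine ⟨U, V, hU₀, hU.symm.trans hV, ?_⟩
    rw [hU, hord.ord_mul hU₀ hL₁]
    rfl
  | succ k ih =>
    obtain ⟨X, Y, hX, hXY, hXord⟩ := ih (by omega)
    show ∃ X Y : A, X ≠ 0 ∧ X * rem (k + 1) = Y * rem (k + 2) ∧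
      ord X + ord L₁ + ord L₂ = ord M + ord (rem (k + 2))
    have hstep : (Y - X * Q (k + 2)) * rem (k + 1) = X * rem (k + 2) := by
      rw [euclidSeq_add_two, mul_sub, sub_mul, ← hXY, mul_assoc]
    have hXR : X * rem (k + 2) ≠ 0 := mul_ne_zero hX (hne (k + 2) (by omega))
    have hX' : Y - X * Q (k + 2) ≠ 0 := left_ne_zero_of_mul (hstep ▸ hXR)
    refine ⟨Y - X * Q (k + 2), X, hX', hstep, ?_⟩
    have := congrArg ord hstep
    rw [hord.ord_mul hX' (hne (k + 1) (by omega)), hord.ord_mul hX (hne (k + 2) (by omega))]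
      at this
    omega

lemma isCLM_cofactor_mul [NoZeroDivisors A] (hne : ∀ k ≤ n + 1, rem k ≠ 0)
    (hlt : ∀ k < n, ord (rem (k + 2)) < ord (rem (k + 1))) (hzero : rem (n + 2) = 0) :
    IsCLM ![L₁, L₂] (cof (n + 2) * L₁) := by
  refine ⟨mul_ne_zero (hord.cofactor_ne_zero_and_ord hne hlt hzero n le_rfl).1
    (hne 0 (by omega)), fun i => ?_⟩
  fin_cases i
  · exact ⟨cof (n + 2), rfl⟩
  · refine ⟨-euclidSeq Q 0 1 (n + 2), ?_⟩
    rw [neg_mul]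
    exact eq_neg_of_add_eq_zero_left ((euclidSeq_bezout Q L₁ L₂ (n + 2)).symm.trans hzero)

lemma ord_cofactor_mul_le [NoZeroDivisors A] (hne : ∀ k ≤ n + 1, rem k ≠ 0)
    (hlt : ∀ k < n, ord (rem (k + 2)) < ord (rem (k + 1))) (hzero : rem (n + 2) = 0)
    {M : A} (hM : IsCLM ![L₁, L₂] M) : ord (cof (n + 2) * L₁) ≤ ord M := by
  obtain ⟨hC, hCord⟩ := hord.cofactor_ne_zero_and_ord hne hlt hzero n le_rfl
  obtain ⟨U, hU⟩ := hM.2 0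
  obtain ⟨V, hV⟩ := hM.2 1
  obtain ⟨X, -, -, -, hXord⟩ := hord.exists_mul_rem_eq_mul_rem hne hM.1 hU hV n le_rfl
  have hL₁ : L₁ ≠ 0 := hne 0 (by omega)
  rw [hord.ord_mul hC hL₁]
  omega

end Euclid

end IsOrderFunction

section DifferentialOperator

variable {K A : Type*}

section Order

variable [Zero K] {e : (ℕ →₀ K) ≃ A}

lemma ordOf_le_iff {x : A} {n : ℕ} : ordOf e x ≤ n ↔ ∀ j, n < j → e.symm x j = 0 := by
  simp only [ordOf, Finset.sup_le_iff, id, Finsupp.mem_support_iff]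
  exact ⟨fun h j hj => by_contra fun hx => absurd (h j hx) (by omega),
    fun h j hx => by_contra fun hj => hx (h j (by omega))⟩

lemma le_ordOf {x : A} {j : ℕ} (h : e.symm x j ≠ 0) : j ≤ ordOf e x :=
  Finset.le_sup (f := id) (Finsupp.mem_support_iff.mpr h)

end Order

variable [Ring K] [Ring A] {δ : K →+ K} {ι : K →+* A} {D : A} {e : (ℕ →₀ K) ≃ A}

def addEquivOfSum (he : ∀ f : ℕ →₀ K, e f = f.sum fun i a => ι a * D ^ i) :
    (ℕ →₀ K) ≃+ A :=
  { e with
    map_add' := fun f g => by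
      simp only [Equiv.toFun_as_coe, he]
      exact Finsupp.sum_add_index' (by simp) fun i a b => by rw [map_add, add_mul] }

section Additive

variable (he : ∀ f : ℕ →₀ K, e f = f.sum fun i a => ι a * D ^ i)
include he

lemma apply_add_of_sum (f g : ℕ →₀ K) : e (f + g) = e f + e g :=
  map_add (addEquivOfSum he) f g

lemma symm_zero_of_sum : e.symm (0 : A) = 0 := map_zero (addEquivOfSum he).symm

lemma symm_add_of_sum (x y : A) : e.symm (x + y) = e.symm x + e.symm y :=
  map_add (addEquivOfSum he).symm x y

lemma symm_neg_of_sum (x : A) : e.symm (-x) = -e.symm x := map_neg (addEquivOfSum he).symm x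

lemma symm_sum_of_sum {α : Type*} (s : Finset α) (x : α → A) :
    e.symm (∑ i ∈ s, x i) = ∑ i ∈ s, e.symm (x i) :=
  map_sum (addEquivOfSum he).symm x s

lemma symm_ne_zero_of_sum {x : A} (hx : x ≠ 0) : e.symm x ≠ 0 :=
  (map_ne_zero_iff (addEquivOfSum he).symm (addEquivOfSum he).symm.injective).mpr hx

lemma symm_ι_mul_apply (a : K) (x : A) (j : ℕ) : e.symm (ι a * x) j = a * e.symm x j := by
  have h : ι a * x = e (Finsupp.mapRange (a * ·) (mul_zero a) (e.symm x)) := by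
    conv_lhs => rw [← e.apply_symm_apply x, he]
    rw [he, Finsupp.sum_mapRange_index (by simp), Finsupp.sum, Finsupp.sum, Finset.mul_sum]
    exact Finset.sum_congr rfl fun i _ => by rw [← mul_assoc, ← map_mul]
  rw [h, e.symm_apply_apply, Finsupp.mapRange_apply]

lemma symm_ordOf_ne_zero {x : A} (hx : x ≠ 0) : e.symm x (ordOf e x) ≠ 0 := by
  obtain ⟨i, hi, h⟩ := Finset.exists_mem_eq_sup _
    (Finsupp.support_nonempty_iff.mpr (symm_ne_zero_of_sum he hx)) id
  rw [ordOf, h]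
  exact Finsupp.mem_support_iff.mp hi

lemma ordOf_add_of_lt {x y : A} (h : ordOf e y < ordOf e x) :
    ordOf e (x + y) = ordOf e x := by
  have hx : x ≠ 0 := by
    rintro rfl
    simp [ordOf, symm_zero_of_sum he] at h
  have hy : ∀ j, ordOf e x ≤ j → e.symm y j = 0 := fun j hj =>
    ordOf_le_iff.mp le_rfl j (by omega)
  refine le_antisymm (ordOf_le_iff.mpr fun j hj => ?_) (le_ordOf ?_)
  · rw [symm_add_of_sum he, Finsupp.add_apply, ordOf_le_iff.mp le_rfl j hj, hy j hj.le, add_zero]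
  · rw [symm_add_of_sum he, Finsupp.add_apply, hy _ le_rfl, add_zero]
    exact symm_ordOf_ne_zero he hx

lemma ordOf_neg (x : A) : ordOf e (-x) = ordOf e x := by
  simp only [ordOf, symm_neg_of_sum he, Finsupp.support_neg]

end Additive

section Multiplicative

variable (he : ∀ f : ℕ →₀ K, e f = f.sum fun i a => ι a * D ^ i)
  (hcomm : ∀ a : K, D * ι a = ι a * D + ι (δ a))
include he hcomm

lemma symm_D_mul_apply (x : A) (j : ℕ) :
    e.symm (D * x) (j + 1) = e.symm x j + δ (e.symm x (j + 1)) := by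
  have h : D * x = e (Finsupp.mapDomain Nat.succ (e.symm x)
      + Finsupp.mapRange δ (map_zero δ) (e.symm x)) := by
    conv_lhs => rw [← e.apply_symm_apply x, he]
    rw [apply_add_of_sum he, he, he,
      Finsupp.sum_mapRange_index (by simp),
      Finsupp.sum_mapDomain_index (by simp) fun i a b => by rw [map_add, add_mul],
      Finsupp.sum, Finsupp.sum, Finsupp.sum, Finset.mul_sum, ← Finset.sum_add_distrib]
    exact Finset.sum_congr rfl fun i _ => by
      rw [← mul_assoc, hcomm, add_mul, mul_assoc, ← pow_succ']
  rw [h, e.symm_apply_apply, Finsupp.add_apply, Finsupp.mapRange_apply,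
    Finsupp.mapDomain_apply Nat.succ_injective]

lemma ordOf_D_mul_le_and_coeff {x : A} {n : ℕ} (hx : ordOf e x ≤ n) :
    ordOf e (D * x) ≤ n + 1 ∧ e.symm (D * x) (n + 1) = e.symm x n := by
  rw [ordOf_le_iff] at hx ⊢
  refine ⟨fun j hj => ?_, ?_⟩
  · obtain ⟨j, rfl⟩ : ∃ i, j = i + 1 := ⟨j - 1, by omega⟩
    rw [symm_D_mul_apply he hcomm, hx j (by omega), hx (j + 1) (by omega), map_zero, add_zero]
  · rw [symm_D_mul_apply he hcomm, hx (n + 1) (by omega), map_zero, add_zero]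

lemma ordOf_D_pow_mul_le_and_coeff {x : A} {n : ℕ} (hx : ordOf e x ≤ n) (k : ℕ) :
    ordOf e (D ^ k * x) ≤ n + k ∧ e.symm (D ^ k * x) (n + k) = e.symm x n := by
  induction k with
  | zero => simpa using hx
  | succ k ih =>
    rw [pow_succ', mul_assoc, ← add_assoc, ← ih.2]
    exact ordOf_D_mul_le_and_coeff he hcomm ih.1

lemma ordOf_mul_le_and_coeff {x y : A} {n m : ℕ} (hx : ordOf e x ≤ n) (hy : ordOf e y ≤ m) :
    ordOf e (x * y) ≤ n + m ∧ e.symm (x * y) (n + m) = e.symm x n * e.symm y m := by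
  have hxy : x * y = ∑ i ∈ Finset.range (n + 1), ι (e.symm x i) * (D ^ i * y) := by
    conv_lhs => rw [← e.apply_symm_apply x, he]
    rw [Finsupp.sum_of_support_subset _ (fun i hi => Finset.mem_range.mpr
        (Nat.lt_succ_of_le ((le_ordOf (Finsupp.mem_support_iff.mp hi)).trans hx))) _
        (fun i _ => by rw [map_zero, zero_mul]), Finset.sum_mul]
    simp only [mul_assoc]
  have hcoeff : ∀ j, e.symm (x * y) j
      = ∑ i ∈ Finset.range (n + 1), e.symm x i * e.symm (D ^ i * y) j := by
    intro j
    rw [hxy, symm_sum_of_sum he, Finsupp.finsetSum_apply]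
    simp only [symm_ι_mul_apply he]
  have hlow : ∀ i, ∀ j, m + i < j → e.symm (D ^ i * y) j = 0 := fun i =>
    ordOf_le_iff.mp (ordOf_D_pow_mul_le_and_coeff he hcomm hy i).1
  refine ⟨ordOf_le_iff.mpr fun j hj => ?_, ?_⟩
  · rw [hcoeff]
    refine Finset.sum_eq_zero fun i hi => ?_
    rw [hlow i j (by rw [Finset.mem_range] at hi; omega), mul_zero]
  · rw [hcoeff, Finset.sum_range_succ, Finset.sum_eq_zero fun i hi => ?_, zero_add,
      add_comm n m, (ordOf_D_pow_mul_le_and_coeff he hcomm hy n).2]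
    rw [hlow i (n + m) (by rw [Finset.mem_range] at hi; omega), mul_zero]

lemma mul_ne_zero_and_ordOf_mul [NoZeroDivisors K] {x y : A} (hx : x ≠ 0) (hy : y ≠ 0) :
    x * y ≠ 0 ∧ ordOf e (x * y) = ordOf e x + ordOf e y := by
  obtain ⟨hle, htop⟩ := ordOf_mul_le_and_coeff he hcomm le_rfl le_rfl (x := x) (y := y)
  have hne : e.symm (x * y) (ordOf e x + ordOf e y) ≠ 0 := by
    rw [htop]
    exact mul_ne_zero (symm_ordOf_ne_zero he hx) (symm_ordOf_ne_zero he hy)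
  refine ⟨fun h => hne ?_, le_antisymm hle (le_ordOf hne)⟩
  rw [h, symm_zero_of_sum he, Finsupp.coe_zero, Pi.zero_apply]

lemma noZeroDivisors_of_sum [NoZeroDivisors K] : NoZeroDivisors A :=
  ⟨fun hxy => by_contra fun h =>
    (mul_ne_zero_and_ordOf_mul he hcomm (not_or.mp h).1 (not_or.mp h).2).1 hxy⟩

lemma isOrderFunction_ordOf [NoZeroDivisors K] : IsOrderFunction (ordOf e) where
  ord_mul hx hy := (mul_ne_zero_and_ordOf_mul he hcomm hx hy).2
  ord_add_of_lt := ordOf_add_of_lt he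
  ord_neg := ordOf_neg he

end Multiplicative

end DifferentialOperator

theorem extended_euclid_lclm_general [Field K] [Ring A]
    (δ : K →+ K)
    (ι : K →+* A) (D : A)
    (hcomm : ∀ a : K, D * ι a = ι a * D + ι (δ a))
    (e : (ℕ →₀ K) ≃ A)
    (he : ∀ f : ℕ →₀ K, e f = f.sum fun i a => ι a * D ^ i)
    (L₁ L₂ : A)
    (m : ℕ) (hm : 2 ≤ m)
    (R Q C : ℕ → A)
    (hR1 : R 1 = L₁) (hR2 : R 2 = L₂)
    (hdiv : ∀ i, 3 ≤ i → i ≤ m + 1 → R i = R (i - 2) - Q i * R (i - 1))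
    (hRne : ∀ i, 1 ≤ i → i ≤ m → R i ≠ 0)
    (hdec : ∀ i, 3 ≤ i → i ≤ m → ordOf e (R i) < ordOf e (R (i - 1)))
    (hRm1 : R (m + 1) = 0)
    (hC1 : C 1 = 1) (hC2 : C 2 = 0)
    (hCrec : ∀ i, 3 ≤ i → i ≤ m → C i = C (i - 2) - Q i * C (i - 1)) :
    IsLCLM e ![L₁, L₂] ((C (m - 1) - Q (m + 1) * C m) * R 1) := by
  obtain ⟨n, rfl⟩ : ∃ n, m = n + 2 := ⟨m - 2, by omega⟩
  have hR : ∀ k ≤ n + 2, R (k + 1) = euclidSeq (fun i => Q (i + 1)) L₁ L₂ k :=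
    eq_euclidSeq hR1 hR2 fun k hk => by simpa using hdiv (k + 3) (by omega) (by omega)
  have hC : ∀ k ≤ n + 1, C (k + 1) = euclidSeq (fun i => Q (i + 1)) 1 0 k :=
    eq_euclidSeq hC1 hC2 fun k hk => by simpa using hCrec (k + 3) (by omega) (by omega)
  have hc : C (n + 2 - 1) - Q (n + 2 + 1) * C (n + 2)
      = euclidSeq (fun i => Q (i + 1)) 1 0 (n + 2) := by
    rw [show n + 2 - 1 = n + 1 by omega, hC n (by omega), hC (n + 1) le_rfl]
    rfl
  have hne : ∀ k ≤ n + 1, euclidSeq (fun i => Q (i + 1)) L₁ L₂ k ≠ 0 := fun k hk =>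
    hR k (by omega) ▸ hRne (k + 1) (by omega) (by omega)
  have hlt : ∀ k < n, ordOf e (euclidSeq (fun i => Q (i + 1)) L₁ L₂ (k + 2))
      < ordOf e (euclidSeq (fun i => Q (i + 1)) L₁ L₂ (k + 1)) := fun k hk => by
    rw [← hR _ (by omega), ← hR _ (by omega)]
    simpa using hdec (k + 3) (by omega) (by omega)
  have hzero : euclidSeq (fun i => Q (i + 1)) L₁ L₂ (n + 2) = 0 := hR _ le_rfl ▸ hRm1
  have := noZeroDivisors_of_sum he hcomm
  have hord := isOrderFunction_ordOf he hcomm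
  rw [hc, hR1]
  exact ⟨hord.isCLM_cofactor_mul hne hlt hzero,
    fun M hM => hord.ord_cofactor_mul_le hne hlt hzero hM⟩

/-- the extended Euclidean–Ore scheme. With remainders `R`,
quotients `Q` and cofactors `C` as in Ore's algorithm, `(C_{m-1} − Q_{m+1} C_m) R₁`
is a least common left multiple of `L₁` and `L₂`. -/
theorem extended_euclid_lclm [Field K] [Ring A]
    (δ : K →+ K) (hLeib : ∀ a b : K, δ (a * b) = a * δ b + δ a * b)
    (ι : K →+* A) (D : A)
    (hcomm : ∀ a : K, D * ι a = ι a * D + ι (δ a))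
    (e : (ℕ →₀ K) ≃ A)
    (he : ∀ f : ℕ →₀ K, e f = f.sum fun i a => ι a * D ^ i)
    (L₁ L₂ : A) (hL₁ : L₁ ≠ 0) (hL₂ : L₂ ≠ 0)
    (r₁ r₂ : ℕ) (hr₁ : ordOf e L₁ = r₁) (hr₂ : ordOf e L₂ = r₂) (hr : r₂ ≤ r₁)
    (m : ℕ) (hm : 2 ≤ m)
    (R Q C : ℕ → A)
    (hR1 : R 1 = L₁) (hR2 : R 2 = L₂)
    (hdiv : ∀ i, 3 ≤ i → i ≤ m + 1 → R i = R (i - 2) - Q i * R (i - 1))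
    (hRne : ∀ i, 1 ≤ i → i ≤ m → R i ≠ 0)
    (hdec : ∀ i, 3 ≤ i → i ≤ m → ordOf e (R i) < ordOf e (R (i - 1)))
    (hRm1 : R (m + 1) = 0)
    (hC1 : C 1 = 1) (hC2 : C 2 = 0)
    (hCrec : ∀ i, 3 ≤ i → i ≤ m → C i = C (i - 2) - Q i * C (i - 1)) :
    IsLCLM e ![L₁, L₂] ((C (m - 1) - Q (m + 1) * C m) * R 1) :=
  extended_euclid_lclm_general δ ι D hcomm e he L₁ L₂ m hm R Q C hR1 hR2 hdiv hRne hdec hRm1 hC1 hC2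
    hCrec
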